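/- For every k ≥ 1, every block-extension marking sequence for the word α = x₁ y x₂ y x₃ y ⋯ x_{2k} y achieves a marking number of at least 2k − 1, whereas loc(α) ≤ k. Hence block-extension greedy strategies have approximation ratio at least 2 − 1/k on α. -/

import Mathlib

noncomputable section

attribute [local instance] Classical.propDecidable

variable {X : Type*} [DecidableEq X]

/-- Number of maximal blocks of `true`s in a list of booleans, where the first
argument is the preceding symbol. -/
def blocksAux : Bool → List Bool → ℕ
  | _, [] => 0
  | prev, b :: rest => (if b = true ∧ prev = false then 1 else 0) + blocksAux b rest

/-- Number of maximal contiguous blocks of positions of `w` whose letter lies in `S`. -/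
def blockCount (w : List X) (S : List X) : ℕ :=
  blocksAux false (w.map (fun x => decide (x ∈ S)))

/-- `σ` is a marking sequence for `w`: an enumeration, without repetition,
of the alphabet of `w`. -/
def IsMarkingSeq (w σ : List X) : Prop := σ.Nodup ∧ σ.toFinset = w.toFinset

/-- The marking number of the marking sequence `σ` on `w`: the maximum, over all
stages `i`, of the number of maximal contiguous marked blocks after marking the
first `i` letters of `σ`. -/
def markingNumber (w σ : List X) : ℕ :=
  Finset.sup (Finset.range (σ.length + 1)) (fun i => blockCount w (σ.take i))

/-- The locality number of `w`: the minimum marking number over all marking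
sequences for `w`. -/
def locality (w : List X) : ℕ :=
  sInf {n | ∃ σ, IsMarkingSeq w σ ∧ markingNumber w σ = n}

/-- `σ` is a block-extension marking sequence for `w`: every letter marked after
the first has, at the moment it is marked, at least one occurrence adjacent to an
already-marked position. -/
def IsBESeq (w σ : List X) : Prop :=
  IsMarkingSeq w σ ∧
    ∀ i c, 1 ≤ i → σ[i]? = some c →
      ∃ p, w[p]? = some c ∧
        ((1 ≤ p ∧ ∃ b, w[p - 1]? = some b ∧ b ∈ σ.take i) ∨
          (∃ b, w[p + 1]? = some b ∧ b ∈ σ.take i))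

/-- The word `α = x₁ y x₂ y x₃ y ⋯ x_{2k} y`, with `x_i = i` and `y = 0`. -/
def beWord (k : ℕ) : List ℕ :=
  (List.range' 1 (2 * k)).flatMap (fun i => [i, 0])

/-! In `α = x₁ y x₂ y ⋯ x_{2k} y` no two `x`'s are adjacent, so a block-extension sequence
either starts with `y`, leaving `2k` blocks, or marks some `x_a` and then `y`. In the latter
case the run of `y`'s is cut by every unmarked `x_i` with `i ≥ 2`, all but at most one of
them, so there are at least `2k - 1` blocks. Conversely, marking `x_{k+1}, …, x_{2k}` first
(`k` isolated blocks), then `y` (one block cut only by `x₂, …, x_k`) and then the rest never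
exceeds `k` blocks. -/

section Marking

variable {w σ : List X}

theorem one_le_blocksAux_false {l : List Bool} (h : true ∈ l) : 1 ≤ blocksAux false l := by
  induction l with
  | nil => simp at h
  | cons b l ih =>
    cases b
    · simpa [blocksAux] using ih (by simpa using h)
    · simp [blocksAux]

theorem one_le_blockCount {S : List X} {x : X} (hw : x ∈ w) (hS : x ∈ S) :
    1 ≤ blockCount w S :=
  one_le_blocksAux_false (List.mem_map.mpr ⟨x, hw, by simp [hS]⟩)

theorem blockCount_take_le_markingNumber {i : ℕ} (hi : i ≤ σ.length) :
    blockCount w (σ.take i) ≤ markingNumber w σ :=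
  Finset.le_sup (f := fun i => blockCount w (σ.take i)) (Finset.mem_range_succ_iff.mpr hi)

theorem markingNumber_le {n : ℕ} (h : ∀ i ≤ σ.length, blockCount w (σ.take i) ≤ n) :
    markingNumber w σ ≤ n :=
  Finset.sup_le fun i hi => h i (Finset.mem_range_succ_iff.mp hi)

theorem IsMarkingSeq.length_eq (h : IsMarkingSeq w σ) : σ.length = w.toFinset.card := by
  rw [← List.toFinset_card_of_nodup h.1, h.2]

theorem isMarkingSeq_dedup (w : List X) : IsMarkingSeq w w.dedup :=
  ⟨w.nodup_dedup, by ext; simp⟩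

theorem one_le_markingNumber (h : IsMarkingSeq w σ) (hw : w ≠ []) :
    1 ≤ markingNumber w σ := by
  obtain ⟨x, hx⟩ := List.exists_mem_of_ne_nil w hw
  obtain ⟨a, t, rfl⟩ := List.exists_cons_of_ne_nil <|
    List.ne_nil_of_mem (List.mem_toFinset.mp (h.2 ▸ List.mem_toFinset.mpr hx))
  have ha : a ∈ w := List.mem_toFinset.mp (h.2 ▸ List.mem_toFinset.mpr List.mem_cons_self)
  calc 1 ≤ blockCount w ((a :: t).take 1) := one_le_blockCount ha (by simp)
    _ ≤ markingNumber w (a :: t) := blockCount_take_le_markingNumber (by simp)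

theorem locality_le_markingNumber (h : IsMarkingSeq w σ) : locality w ≤ markingNumber w σ :=
  Nat.sInf_le ⟨σ, h, rfl⟩

theorem one_le_locality (hw : w ≠ []) : 1 ≤ locality w :=
  le_csInf ⟨_, w.dedup, isMarkingSeq_dedup w, rfl⟩ fun _ ⟨_, hσ, hn⟩ =>
    hn ▸ one_le_markingNumber hσ hw

theorem IsBESeq.adjacent_of_cons_cons {a b : X} {t : List X} (h : IsBESeq w (a :: b :: t)) :
    ∃ p, (w[p]? = some a ∧ w[p + 1]? = some b) ∨ (w[p]? = some b ∧ w[p + 1]? = some a) := by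
  obtain ⟨p, hp, ⟨hp1, c, hc, hca⟩ | ⟨c, hc, hca⟩⟩ := h.2 1 b le_rfl rfl <;>
    simp only [List.take_succ_cons, List.take_zero, List.mem_singleton] at hca <;> subst hca
  · exact ⟨p - 1, .inl ⟨hc, by rwa [Nat.sub_add_cancel hp1]⟩⟩
  · exact ⟨p, .inr ⟨hp, hc⟩⟩

end Marking

section PairList

variable {α β : Type*}

theorem blocksAux_flatMap_pair_false (b : α → Bool) (l : List α) :
    blocksAux false (l.flatMap fun i => [b i, false]) = (l.filter b).length := by
  induction l with
  | nil => rfl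
  | cons a l ih => cases h : b a <;> simp [blocksAux, h, ih, add_comm]

theorem blocksAux_flatMap_pair_true (b : α → Bool) (l : List α) :
    blocksAux true (l.flatMap fun i => [b i, true]) = (l.filter (!b ·)).length := by
  induction l with
  | nil => rfl
  | cons a l ih => cases h : b a <;> simp [blocksAux, h, ih, add_comm]

theorem getElem?_flatMap_pair_two_mul_add_one (f : α → β) (c : β) (l : List α) (j : ℕ) :
    (l.flatMap fun i => [f i, c])[2 * j + 1]? = l[j]?.map fun _ => c := by
  induction l generalizing j with
  | nil => simp
  | cons a l ih =>
    cases j with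
    | zero => simp
    | succ j => simpa [Nat.mul_succ] using ih j

theorem eq_or_eq_of_adjacent_flatMap_pair {f : α → β} {c a b : β} {l : List α} {p : ℕ}
    (ha : (l.flatMap fun i => [f i, c])[p]? = some a)
    (hb : (l.flatMap fun i => [f i, c])[p + 1]? = some b) : a = c ∨ b = c := by
  obtain ⟨j, rfl | rfl⟩ := Nat.even_or_odd' p
  · rw [getElem?_flatMap_pair_two_mul_add_one] at hb
    obtain ⟨_, _, rfl⟩ := Option.map_eq_some_iff.mp hb
    exact .inr rfl
  · rw [getElem?_flatMap_pair_two_mul_add_one] at ha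
    obtain ⟨_, _, rfl⟩ := Option.map_eq_some_iff.mp ha
    exact .inl rfl

end PairList

section BEWord

variable {k : ℕ} {S : List ℕ}

theorem mem_beWord (hk : 1 ≤ k) {x : ℕ} : x ∈ beWord k ↔ x ≤ 2 * k := by
  simp only [beWord, List.mem_flatMap, List.mem_range'_1, List.mem_cons,
    List.not_mem_nil, or_false]
  constructor
  · rintro ⟨i, hi, rfl | rfl⟩ <;> omega
  · intro hx
    rcases Nat.eq_zero_or_pos x with rfl | hx0
    · exact ⟨1, by omega, .inr rfl⟩
    · exact ⟨x, by omega, .inl rfl⟩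

theorem toFinset_beWord (hk : 1 ≤ k) : (beWord k).toFinset = Finset.range (2 * k + 1) := by
  ext x
  simp [mem_beWord hk]

theorem blockCount_beWord (S : List ℕ) :
    blockCount (beWord k) S =
      blocksAux false
        ((List.range' 1 (2 * k)).flatMap fun i => [decide (i ∈ S), decide (0 ∈ S)]) := by
  simp [blockCount, beWord, List.map_flatMap]

theorem blockCount_beWord_of_zero_not_mem (h : 0 ∉ S) :
    blockCount (beWord k) S = ((List.range' 1 (2 * k)).filter (· ∈ S)).length := by
  rw [blockCount_beWord, decide_eq_false h, blocksAux_flatMap_pair_false]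

theorem blockCount_beWord_of_zero_mem (hk : 1 ≤ k) (h : 0 ∈ S) :
    blockCount (beWord k) S = 1 + ((List.range' 2 (2 * k - 1)).filter (· ∉ S)).length := by
  obtain ⟨n, hn⟩ : ∃ n, 2 * k = n + 1 := ⟨2 * k - 1, by omega⟩
  rw [blockCount_beWord, decide_eq_true h, hn, List.range'_succ, List.flatMap_cons]
  cases decide (1 ∈ S) <;>
    simp [blocksAux, blocksAux_flatMap_pair_true, show n = 2 * k - 1 by omega]

theorem blockCount_beWord_le_length (h : 0 ∉ S) : blockCount (beWord k) S ≤ S.length := by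
  rw [blockCount_beWord_of_zero_not_mem h]
  refine ((List.Nodup.filter _ List.nodup_range').subperm fun x hx => ?_).length_le
  simpa using (List.mem_filter.mp hx).2

theorem le_blockCount_beWord_of_zero_mem (hk : 1 ≤ k) (h : 0 ∈ S) :
    2 * k + 1 - S.length ≤ blockCount (beWord k) S := by
  set l := List.range' 2 (2 * k - 1)
  have hmarked : (l.filter (· ∈ S)).length ≤ S.length - 1 := by
    rw [← List.length_erase_of_mem h]
    refine ((List.Nodup.filter _ List.nodup_range').subperm fun x hx => ?_).length_le
    obtain ⟨hxl, hxS⟩ := List.mem_filter.mp hx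
    exact (List.mem_erase_of_ne (by simp at hxl; omega)).mpr (by simpa using hxS)
  have hsplit := l.length_eq_length_filter_add (· ∈ S)
  rw [blockCount_beWord_of_zero_mem hk h]
  simp only [l, List.length_range', decide_not] at hsplit hmarked ⊢
  have := List.length_pos_of_mem h
  omega

theorem beWord_adjacent {p a b : ℕ} (ha : (beWord k)[p]? = some a)
    (hb : (beWord k)[p + 1]? = some b) : a = 0 ∨ b = 0 :=
  eq_or_eq_of_adjacent_flatMap_pair (f := fun i => i) ha hb

theorem two_mul_sub_one_le_markingNumber_of_isBESeq (hk : 1 ≤ k) {σ : List ℕ}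
    (hσ : IsBESeq (beWord k) σ) : 2 * k - 1 ≤ markingNumber (beWord k) σ := by
  have hlen := hσ.1.length_eq
  rw [toFinset_beWord hk, Finset.card_range] at hlen
  obtain ⟨a, b, t, rfl⟩ : ∃ a b t, σ = a :: b :: t := by
    rcases σ with _ | ⟨a, _ | ⟨b, t⟩⟩
    · simp at hlen
    · simp at hlen; omega
    · exact ⟨a, b, t, rfl⟩
  by_cases ha : a = 0
  · subst ha
    calc 2 * k - 1 ≤ 2 * k + 1 - [0].length := by simp
      _ ≤ blockCount (beWord k) ((0 :: b :: t).take 1) :=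
        le_blockCount_beWord_of_zero_mem hk (by simp)
      _ ≤ _ := blockCount_take_le_markingNumber (by simp)
  · obtain rfl : b = 0 := by
      obtain ⟨p, ⟨hpa, hpb⟩ | ⟨hpb, hpa⟩⟩ := hσ.adjacent_of_cons_cons
      · exact (beWord_adjacent hpa hpb).resolve_left ha
      · exact (beWord_adjacent hpb hpa).resolve_right ha
    calc 2 * k - 1 = 2 * k + 1 - [a, 0].length := by simp
      _ ≤ blockCount (beWord k) ((a :: 0 :: t).take 2) :=
        le_blockCount_beWord_of_zero_mem hk (by simp)
      _ ≤ _ := blockCount_take_le_markingNumber (by simp)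

def beWordMarking (k : ℕ) : List ℕ := List.range' (k + 1) k ++ 0 :: List.range' 1 k

theorem beWordMarking_perm : (beWordMarking k).Perm (List.range (2 * k + 1)) := by
  calc (beWordMarking k).Perm ((0 :: List.range' 1 k) ++ List.range' (k + 1) k) :=
        List.perm_append_comm
    _ = List.range (2 * k + 1) := by
      rw [List.range_eq_range', List.range'_succ, two_mul, ← List.range'_append_1, add_comm 1 k]
      rfl

theorem isMarkingSeq_beWordMarking (hk : 1 ≤ k) : IsMarkingSeq (beWord k) (beWordMarking k) :=
  ⟨beWordMarking_perm.nodup_iff.mpr List.nodup_range, by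
    rw [List.toFinset_eq_of_perm _ _ beWordMarking_perm, toFinset_beWord hk, List.toFinset_range]⟩

theorem markingNumber_beWordMarking_le (hk : 1 ≤ k) :
    markingNumber (beWord k) (beWordMarking k) ≤ k := by
  refine markingNumber_le fun i _ => ?_
  rcases le_or_gt i k with hik | hki
  · have htake : (beWordMarking k).take i = (List.range' (k + 1) k).take i :=
      List.take_append_of_le_length (by simpa)
    calc blockCount (beWord k) ((beWordMarking k).take i) ≤ ((beWordMarking k).take i).length :=
          blockCount_beWord_le_length fun h0 => by
            rw [htake] at h0
            simpa [List.mem_range'_1] using List.mem_of_mem_take h0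
      _ ≤ k := by simp; omega
  · obtain ⟨t, ht⟩ : ∃ t, (beWordMarking k).take i = List.range' (k + 1) k ++ 0 :: t := by
      rw [beWordMarking, List.take_append, List.take_of_length_le (by simp; omega),
        List.length_range', show i - k = i - k - 1 + 1 by omega, List.take_succ_cons]
      exact ⟨_, rfl⟩
    have hnil : (List.range' (k + 1) k).filter (· ∉ List.range' (k + 1) k ++ 0 :: t) = [] :=
      List.filter_eq_nil_iff.mpr fun x hx => by simp [hx]
    rw [ht, blockCount_beWord_of_zero_mem hk (by simp), show 2 * k - 1 = (k - 1) + k by omega,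
      ← List.range'_append_1, show 2 + (k - 1) = k + 1 by omega, List.filter_append, hnil,
      List.append_nil]
    have := List.length_filter_le (· ∉ List.range' (k + 1) k ++ 0 :: t) (List.range' 2 (k - 1))
    simp only [List.length_range'] at this
    omega

end BEWord

theorem two_sub_one_div_le_div {k m L : ℕ} (hL : 1 ≤ L) (hLk : L ≤ k) (hm : 2 * k - 1 ≤ m) :
    (2 : ℚ) - 1 / k ≤ m / L := by
  have hL1 : (1 : ℚ) ≤ L := by exact_mod_cast hL
  have hLkq : (L : ℚ) ≤ k := by exact_mod_cast hLk
  have hmq : (2 * k - 1 : ℚ) ≤ m := by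
    have := (Nat.cast_le (α := ℚ)).mpr hm
    rwa [Nat.cast_sub (by omega), Nat.cast_mul, Nat.cast_two, Nat.cast_one] at this
  calc (2 : ℚ) - 1 / k = (2 * k - 1) / k := by field_simp [show (k : ℚ) ≠ 0 by linarith]
    _ ≤ (2 * k - 1) / L := by gcongr; linarith
    _ ≤ m / L := by gcongr

/-- For every `k ≥ 1`: every block-extension marking sequence for
`α = x₁ y x₂ y ⋯ x_{2k} y` has marking number at least `2k - 1`, whereas
`loc(α) ≤ k`; hence block-extension greedy strategies have approximation ratio at
least `2 - 1/k` on `α`. -/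
theorem be_greedy_bad (k : ℕ) (hk : 1 ≤ k) :
    (∀ σ, IsBESeq (beWord k) σ → 2 * k - 1 ≤ markingNumber (beWord k) σ) ∧
    locality (beWord k) ≤ k ∧
    (∀ σ, IsBESeq (beWord k) σ →
      (2 : ℚ) - 1 / (k : ℚ) ≤
        (markingNumber (beWord k) σ : ℚ) / (locality (beWord k) : ℚ)) := by
  have hBE (σ : List ℕ) (hσ : IsBESeq (beWord k) σ) :
      2 * k - 1 ≤ markingNumber (beWord k) σ :=
    two_mul_sub_one_le_markingNumber_of_isBESeq hk hσ
  have hloc : locality (beWord k) ≤ k :=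
    (locality_le_markingNumber (isMarkingSeq_beWordMarking hk)).trans
      (markingNumber_beWordMarking_le hk)
  have hpos : 1 ≤ locality (beWord k) :=
    one_le_locality (List.ne_nil_of_mem ((mem_beWord hk).mpr (Nat.zero_le _)))
  exact ⟨hBE, hloc, fun σ hσ => two_sub_one_div_le_div hpos hloc (hBE σ hσ)⟩
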